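/- For a homogeneous extended multi-segment 𝒮 = (([A_i,B_i],μ_i))_{i=1}^{n}, define Σ(𝒮) := Σ_{i=1}^{n} ( ⌊μ_i/2⌋ + μ_i · Σ_{j<i}(b_j − 1) ). Then for any standard 𝒮 and any compatible extended segment ([C,D],ν), Σ(𝒮_{([C,D],ν)}) ≡ Σ(𝒮) (mod 2); in particular the sign condition Σ ≡ 0 (mod 2) holds for 𝒮_{([C,D],ν)} if and only if it holds for 𝒮. -/

import Mathlib

/-- An extended segment `([A,B], μ)` with half-integer endpoints and integer parameter `μ`. -/
structure ExtSeg where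
  A : ℚ
  B : ℚ
  mu : ℤ

namespace ExtSeg

/-- `b = A - B + 1`. -/
def segb (S : ExtSeg) : ℚ := S.A - S.B + 1

/-- `a = A + B + 1`. -/
def sega (S : ExtSeg) : ℚ := S.A + S.B + 1

/-- `μ̂ = μ` if `B ∈ ℤ`, and `μ - 1` otherwise. -/
def muHat (S : ExtSeg) : ℤ := if S.B.den = 1 then S.mu else S.mu - 1

end ExtSeg

/-- A homogeneous formal extended multi-segment of length `n`, encoded as a function
`ℕ → ExtSeg` whose relevant entries are those with index `< n`:
half-integral endpoints, `A_i - B_i ∈ ℤ_{≥0}`, `A_i + B_i ≥ 0`, a common integrality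
class for all the `A_i`, parity `μ_i ≡ b_i (mod 2)`, and admissible order. -/
def IsFormalEMS (n : ℕ) (S : ℕ → ExtSeg) : Prop :=
  (∀ i, i < n → ∃ k : ℤ, 2 * (S i).A = (k : ℚ)) ∧
  (∀ i, i < n → ∃ k : ℕ, (S i).A - (S i).B = (k : ℚ)) ∧
  (∀ i, i < n → 0 ≤ (S i).A + (S i).B) ∧
  (∀ i, i < n → ∀ j, j < n → ∃ k : ℤ, (S i).A - (S j).A = (k : ℚ)) ∧
  (∀ i, i < n → ∃ k : ℤ, ((S i).mu : ℚ) - (S i).segb = 2 * (k : ℚ)) ∧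
  (∀ i, i < n → ∀ j, j < n → (S j).A < (S i).A → (S j).B < (S i).B → j < i)

/-- A homogeneous extended multi-segment: a formal one with moreover `|μ_i| ≤ b_i`. -/
def IsEMS (n : ℕ) (S : ℕ → ExtSeg) : Prop :=
  IsFormalEMS n S ∧ ∀ i, i < n → |((S i).mu : ℚ)| ≤ (S i).segb

/-- Replace the entries at positions `i` and `i+1` by `x` and `y`. -/
def swapAt (S : ℕ → ExtSeg) (i : ℕ) (x y : ExtSeg) : ℕ → ExtSeg :=
  fun j => if j = i then x else if j = i + 1 then y else S j

/-- One reorder `R_i` (at some position `i` with `i + 1 < n`). -/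
def ReorderStep (n : ℕ) (S S' : ℕ → ExtSeg) : Prop :=
  ∃ i, i + 1 < n ∧
    (((S i).A ≤ (S (i+1)).A ∧ (S (i+1)).B ≤ (S i).B ∧
        S' = swapAt S i ⟨(S (i+1)).A, (S (i+1)).B, 2 * (S i).mu - (S (i+1)).mu⟩
                        ⟨(S i).A, (S i).B, (S i).mu⟩) ∨
     ((S (i+1)).A ≤ (S i).A ∧ (S i).B ≤ (S (i+1)).B ∧
        S' = swapAt S i ⟨(S (i+1)).A, (S (i+1)).B, (S (i+1)).mu⟩
                        ⟨(S i).A, (S i).B, 2 * (S (i+1)).mu - (S i).mu⟩) ∨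
     ((S i).A ≤ (S (i+1)).A ∧ (S i).B ≤ (S (i+1)).B ∧ S' = S))

/-- `𝒮'` is a reordering of `𝒮`: it is obtained by a finite sequence of reorders. -/
def Reorder (n : ℕ) : (ℕ → ExtSeg) → (ℕ → ExtSeg) → Prop :=
  Relation.ReflTransGen (ReorderStep n)

/-- The necessary condition (nec):
`|A_{i+1} - A_i| + |B_{i+1} - B_i| ≥ |μ_{i+1} - μ_i|` for consecutive entries. -/
def Nec (n : ℕ) (S : ℕ → ExtSeg) : Prop :=
  ∀ i, i + 1 < n →
    |((S (i+1)).mu : ℚ) - ((S i).mu : ℚ)| ≤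
      |(S (i+1)).A - (S i).A| + |(S (i+1)).B - (S i).B|

/-- Admissibility: if some `B_i < 0`, then `B_i > B_j` implies `i > j`. -/
def IsAdmissible (n : ℕ) (S : ℕ → ExtSeg) : Prop :=
  (∃ i, i < n ∧ (S i).B < 0) →
    ∀ i, i < n → ∀ j, j < n → (S j).B < (S i).B → j < i

/-- Standard: `B_i < B_j`, or `B_i = B_j` and `A_i > A_j`, implies `i < j`. -/
def IsStandard (n : ℕ) (S : ℕ → ExtSeg) : Prop :=
  ∀ i, i < n → ∀ j, j < n →
    ((S i).B < (S j).B ∨ ((S i).B = (S j).B ∧ (S j).A < (S i).A)) → i < j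

/-- Membership in `Rep`: an admissible homogeneous extended multi-segment all of whose
reorderings satisfy (nec), and with `|μ̂_i| ≤ a_i` for all `i`. -/
def InRep (n : ℕ) (S : ℕ → ExtSeg) : Prop :=
  IsEMS n S ∧ IsAdmissible n S ∧
  (∀ S', Reorder n S S' → Nec n S') ∧
  (∀ i, i < n → |((S i).muHat : ℚ)| ≤ (S i).sega)

/-- Membership in `SRep`: standard and in `Rep`. -/
def InSRep (n : ℕ) (S : ℕ → ExtSeg) : Prop :=
  IsStandard n S ∧ InRep n S

/-- `S_i ∼ S_j` (`i < j`) are connected: no `k` with `i < k < j` and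
`A_i ≥ A_k ≥ A_j` or `A_i < A_k < A_j`. -/
def Connected (n : ℕ) (S : ℕ → ExtSeg) (i j : ℕ) : Prop :=
  i < j ∧ j < n ∧
    ¬ ∃ k, i < k ∧ k < j ∧
      (((S j).A ≤ (S k).A ∧ (S k).A ≤ (S i).A) ∨
       ((S i).A < (S k).A ∧ (S k).A < (S j).A))

/-- `Δ_𝒮(μ_i, μ_j)` for `i < j`. -/
def Delta (S : ℕ → ExtSeg) (i j : ℕ) : ℤ :=
  ∑ m ∈ Finset.Ico i j,
    (-1 : ℤ) ^ ((Finset.Ioo m j).filter (fun k => (S k).A ≤ (S i).A)).card *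
      ((S (m+1)).mu - (S m).mu)

/-- An extended segment `([C,D],ν)` compatible with `𝒮`. -/
def Compatible (n : ℕ) (S : ℕ → ExtSeg) (T : ExtSeg) : Prop :=
  (∃ k : ℤ, 2 * T.A = (k : ℚ)) ∧
  (∃ k : ℕ, T.A - T.B = (k : ℚ)) ∧
  0 ≤ T.A + T.B ∧
  (∀ i, i < n → ∃ k : ℤ, T.A - (S i).A = (k : ℚ)) ∧
  (∃ k : ℤ, (T.mu : ℚ) - T.segb = 2 * (k : ℚ)) ∧
  |(T.mu : ℚ)| ≤ T.segb

/-- The (0-based) insertion position of `([C,D],ν)` into the standard `𝒮`: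
the number of indices `k` with `B_k < D`, or `B_k = D` and `A_k ≥ C`. -/
def insertPos (n : ℕ) (S : ℕ → ExtSeg) (T : ExtSeg) : ℕ :=
  ((Finset.range n).filter
    (fun k => (S k).B < T.B ∨ ((S k).B = T.B ∧ T.A ≤ (S k).A))).card

/-- The insertion `𝒮_{([C,D],ν)}`: insert `T` twice at the consecutive positions
`insertPos n S T` and `insertPos n S T + 1`; the result has length `n + 2`. -/
def insertTwice (n : ℕ) (S : ℕ → ExtSeg) (T : ExtSeg) : ℕ → ExtSeg :=
  fun j =>
    if j < insertPos n S T then S j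
    else if j = insertPos n S T ∨ j = insertPos n S T + 1 then T
    else S (j - 2)

/-- `Σ(𝒮) = ∑_i (⌊μ_i/2⌋ + μ_i · ∑_{j<i} (b_j - 1))`. -/
def SigmaSum (n : ℕ) (S : ℕ → ExtSeg) : ℚ :=
  ∑ i ∈ Finset.range n,
    (((S i).mu.fdiv 2 : ℚ) + ((S i).mu : ℚ) * ∑ j ∈ Finset.range i, ((S j).segb - 1))

section AuxStmt8

open Finset

lemma aux_sum_range_split {M : Type*} [AddCommMonoid M] (g : ℕ → M) {a b : ℕ} (h : a ≤ b) :
    ∑ i ∈ Finset.range b, g i = ∑ i ∈ Finset.range a, g i + ∑ i ∈ Finset.Ico a b, g i := by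
  rw [Finset.range_eq_Ico, Finset.range_eq_Ico]
  exact (Finset.sum_Ico_consecutive g (Nat.zero_le a) h).symm

lemma aux_sum_Ico_shift2 {M : Type*} [AddCommMonoid M] (g : ℕ → M) (a b : ℕ) :
    ∑ i ∈ Finset.Ico (a+2) (b+2), g i = ∑ i ∈ Finset.Ico a b, g (i+2) := by
  rw [Finset.sum_Ico_eq_sum_range, Finset.sum_Ico_eq_sum_range]
  have hb : b + 2 - (a + 2) = b - a := by omega
  rw [hb]
  exact Finset.sum_congr rfl fun i _ => by congr 1; omega

lemma aux_sum_int_cast {s : Finset ℕ} {g : ℕ → ℚ} (h : ∀ j ∈ s, ∃ k : ℤ, g j = (k : ℚ)) :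
    ∃ q : ℤ, ∑ j ∈ s, g j = (q : ℚ) := by
  classical
  choose f hf using h
  refine ⟨∑ j ∈ s.attach, f j j.2, ?_⟩
  rw [← Finset.sum_attach s g]
  push_cast
  exact Finset.sum_congr rfl fun j _ => hf j j.2

lemma aux_insertPos_le (n : ℕ) (S : ℕ → ExtSeg) (T : ExtSeg) : insertPos n S T ≤ n :=
  (Finset.card_filter_le _ _).trans (le_of_eq (Finset.card_range n))

lemma aux_insertTwice_lt (n : ℕ) (S : ℕ → ExtSeg) (T : ExtSeg) {j : ℕ}
    (h : j < insertPos n S T) : insertTwice n S T j = S j := by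
  simp [insertTwice, h]

lemma aux_insertTwice_pos (n : ℕ) (S : ℕ → ExtSeg) (T : ExtSeg) :
    insertTwice n S T (insertPos n S T) = T := by
  simp [insertTwice]

lemma aux_insertTwice_pos1 (n : ℕ) (S : ℕ → ExtSeg) (T : ExtSeg) :
    insertTwice n S T (insertPos n S T + 1) = T := by
  simp [insertTwice]

lemma aux_insertTwice_shift (n : ℕ) (S : ℕ → ExtSeg) (T : ExtSeg) {j : ℕ}
    (h : insertPos n S T ≤ j) : insertTwice n S T (j + 2) = S j := by
  have h1 : ¬ (j + 2 < insertPos n S T) := by omega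
  have h2 : ¬ (j + 2 = insertPos n S T ∨ j + 2 = insertPos n S T + 1) := by omega
  simp only [insertTwice, if_neg h1, if_neg h2]
  congr 1

/-- Inner partial sum `∑_{j<m} (b_j - 1)`. -/
def innerQ (S : ℕ → ExtSeg) (m : ℕ) : ℚ := ∑ j ∈ Finset.range m, ((S j).segb - 1)

/-- Term of `SigmaSum`. -/
def sigTerm (S : ℕ → ExtSeg) (i : ℕ) : ℚ :=
  ((S i).mu.fdiv 2 : ℚ) + ((S i).mu : ℚ) * innerQ S i

lemma SigmaSum_eq (n : ℕ) (S : ℕ → ExtSeg) :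
    SigmaSum n S = ∑ i ∈ Finset.range n, sigTerm S i := rfl

lemma aux_innerQ_le (n : ℕ) (S : ℕ → ExtSeg) (T : ExtSeg) {m : ℕ}
    (h : m ≤ insertPos n S T) : innerQ (insertTwice n S T) m = innerQ S m :=
  Finset.sum_congr rfl fun j hj => by
    rw [aux_insertTwice_lt n S T (lt_of_lt_of_le (Finset.mem_range.mp hj) h)]

lemma aux_innerQ_shift (n : ℕ) (S : ℕ → ExtSeg) (T : ExtSeg) {i : ℕ}
    (h : insertPos n S T ≤ i) :
    innerQ (insertTwice n S T) (i + 2) = innerQ S i + 2 * (T.segb - 1) := by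
  set p := insertPos n S T with hp
  have h1 : innerQ (insertTwice n S T) (i+2)
      = innerQ (insertTwice n S T) (p+2)
        + ∑ j ∈ Finset.Ico (p+2) (i+2), ((insertTwice n S T j).segb - 1) :=
    aux_sum_range_split _ (by omega)
  have h2 : innerQ (insertTwice n S T) (p+2) = innerQ S p + 2 * (T.segb - 1) := by
    unfold innerQ
    rw [Finset.sum_range_succ, Finset.sum_range_succ]
    rw [show (∑ j ∈ Finset.range p, ((insertTwice n S T j).segb - 1))
        = innerQ (insertTwice n S T) p from rfl, aux_innerQ_le n S T le_rfl]
    rw [← hp, aux_insertTwice_pos, aux_insertTwice_pos1]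
    unfold innerQ; ring
  have h3 : ∑ j ∈ Finset.Ico (p+2) (i+2), ((insertTwice n S T j).segb - 1)
      = ∑ j ∈ Finset.Ico p i, ((S j).segb - 1) := by
    rw [aux_sum_Ico_shift2]
    exact Finset.sum_congr rfl fun j hj => by
      rw [aux_insertTwice_shift n S T (Finset.mem_Ico.mp hj).1]
  have h4 : innerQ S i = innerQ S p + ∑ j ∈ Finset.Ico p i, ((S j).segb - 1) :=
    aux_sum_range_split _ h
  rw [h1, h2, h3, h4]; ring

end AuxStmt8

/-- Inserting a compatible extended segment twice does not change the sign sum mod 2. -/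
theorem stmt_8 (n : ℕ) (S : ℕ → ExtSeg) (T : ExtSeg)
    (hS : IsEMS n S) (hstd : IsStandard n S) (hT : Compatible n S T) :
    (∃ k : ℤ, SigmaSum (n + 2) (insertTwice n S T) - SigmaSum n S = 2 * (k : ℚ)) ∧
    ((∃ k : ℤ, SigmaSum (n + 2) (insertTwice n S T) = 2 * (k : ℚ)) ↔
      (∃ k : ℤ, SigmaSum n S = 2 * (k : ℚ))) := by
  classical
  obtain ⟨⟨_, hAB, _, _, hpar, _⟩, hbd⟩ := hS
  obtain ⟨_, ⟨eN, heN⟩, _, _, ⟨kT, hkT⟩, _⟩ := hT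
  have hpn : insertPos n S T ≤ n := aux_insertPos_le n S T
  set p := insertPos n S T with hp
  -- the key difference formula
  have key : SigmaSum (n+2) (insertTwice n S T) - SigmaSum n S
      = 2 * ((T.mu.fdiv 2 : ℤ) : ℚ) + (T.mu : ℚ) * (2 * innerQ S p + (T.segb - 1))
        + 2 * (T.segb - 1) * ∑ i ∈ Finset.Ico p n, ((S i).mu : ℚ) := by
    rw [SigmaSum_eq, SigmaSum_eq]
    rw [aux_sum_range_split (fun i => sigTerm (insertTwice n S T) i) (show p+2 ≤ n+2 by omega)]
    rw [aux_sum_range_split (fun i => sigTerm S i) hpn]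
    rw [Finset.sum_range_succ, Finset.sum_range_succ]
    have e0 : ∑ i ∈ Finset.range p, sigTerm (insertTwice n S T) i
        = ∑ i ∈ Finset.range p, sigTerm S i := by
      refine Finset.sum_congr rfl fun i hi => ?_
      have hip : i < p := Finset.mem_range.mp hi
      unfold sigTerm
      rw [aux_insertTwice_lt n S T hip, aux_innerQ_le n S T hip.le]
    have e1 : sigTerm (insertTwice n S T) p
        = ((T.mu.fdiv 2 : ℤ) : ℚ) + (T.mu : ℚ) * innerQ S p := by
      unfold sigTerm
      rw [aux_innerQ_le n S T le_rfl, aux_insertTwice_pos]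
    have e2 : sigTerm (insertTwice n S T) (p+1)
        = ((T.mu.fdiv 2 : ℤ) : ℚ) + (T.mu : ℚ) * (innerQ S p + (T.segb - 1)) := by
      unfold sigTerm
      have : innerQ (insertTwice n S T) (p+1) = innerQ S p + (T.segb - 1) := by
        unfold innerQ
        rw [Finset.sum_range_succ,
          show (∑ j ∈ Finset.range p, ((insertTwice n S T j).segb - 1))
            = innerQ (insertTwice n S T) p from rfl, aux_innerQ_le n S T le_rfl,
          aux_insertTwice_pos]
        rfl
      rw [this, aux_insertTwice_pos1]
    have e3 : ∑ i ∈ Finset.Ico (p+2) (n+2), sigTerm (insertTwice n S T) i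
        = ∑ i ∈ Finset.Ico p n, (sigTerm S i + ((S i).mu : ℚ) * (2 * (T.segb - 1))) := by
      rw [aux_sum_Ico_shift2]
      refine Finset.sum_congr rfl fun i hi => ?_
      obtain ⟨hpi, hin⟩ := Finset.mem_Ico.mp hi
      unfold sigTerm
      rw [aux_insertTwice_shift n S T hpi, aux_innerQ_shift n S T hpi]
      ring
    rw [e0, e1, e2, e3, Finset.sum_add_distrib, ← Finset.sum_mul]
    ring
  -- integrality of the pieces
  obtain ⟨q, hq⟩ : ∃ q : ℤ, innerQ S p = (q : ℚ) := by
    refine aux_sum_int_cast fun j hj => ?_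
    obtain ⟨k, hk⟩ := hAB j (lt_of_lt_of_le (Finset.mem_range.mp hj) hpn)
    refine ⟨(k : ℤ), ?_⟩
    unfold ExtSeg.segb
    push_cast
    linarith
  set M : ℤ := ∑ i ∈ Finset.Ico p n, (S i).mu with hMdef
  have hM : ∑ i ∈ Finset.Ico p n, ((S i).mu : ℚ) = (M : ℚ) := by
    rw [hMdef]; push_cast; rfl
  -- T.segb - 1 = eN, and parity of T.mu
  have hsegb : T.segb - 1 = (eN : ℚ) := by
    unfold ExtSeg.segb; linarith [heN]
  have hmu : T.mu = 2 * kT + (eN : ℤ) + 1 := by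
    have : (T.mu : ℚ) = 2 * (kT : ℚ) + (eN : ℚ) + 1 := by
      rw [← hsegb] at *; unfold ExtSeg.segb at hkT ⊢; linarith [hkT]
    exact_mod_cast this
  obtain ⟨w, hw⟩ : ∃ w : ℤ, T.mu * (eN : ℤ) = 2 * w := by
    obtain ⟨v, hv⟩ := Int.even_mul_succ_self (eN : ℤ)
    exact ⟨kT * eN + v, by rw [hmu]; ring_nf; ring_nf at hv; omega⟩
  have main : SigmaSum (n+2) (insertTwice n S T) - SigmaSum n S
      = 2 * ((T.mu.fdiv 2 + T.mu * q + w + (eN : ℤ) * M : ℤ) : ℚ) := by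
    rw [key, hq, hsegb, hM]
    have hwQ : (T.mu : ℚ) * (eN : ℚ) = 2 * (w : ℚ) := by exact_mod_cast hw
    push_cast
    linear_combination hwQ
  obtain ⟨K, hKmain⟩ : ∃ k : ℤ, SigmaSum (n+2) (insertTwice n S T) - SigmaSum n S = 2 * (k : ℚ) :=
    ⟨_, main⟩
  refine ⟨⟨K, hKmain⟩, ?_⟩
  constructor
  · rintro ⟨k, hk⟩
    exact ⟨k - K, by push_cast; linarith⟩
  · rintro ⟨k, hk⟩
    exact ⟨k + K, by push_cast; linarith⟩
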